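/- arXiv:math/0306064 — 2 statements merged into one kernel-verified Lean document; each statement's English description precedes it below -/
import Mathlib

section
/- Let P and Q be orthogonal projections on a Hilbert space H such that (P - Q)^{2k+1} is trace class for some natural number k. Then for every m ≥ 0, (P - Q)^{2k+1+2m} is trace class and Tr((P - Q)^{2k+1+2m}) = Tr((P - Q)^{2k+1}). -/
/-!
Put `T = P - Q` and `B = 1 - P - Q`; then `T² + B² = 1` and `TB = -BT`, so `‖T‖ ≤ 1`.
The continuous functional calculus factors `T^(2j+1) = S_j R_j` with `R_j = |T|^(j+1/2)` and
`S_j = sgn(T) |T|^(j+1/2)`. Both are Hilbert–Schmidt for `j ≥ k`: `‖S_j x‖ = ‖R_j x‖`,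
`R_j^2 = |T^(2j+1)|`, and `j ↦ ‖R_j x‖` decreases because `‖T‖ ≤ 1`.
Now `(R_j B)(B S_j) = R_j (1 - T²) S_j = T^(2j+1) - T^(2j+3)`, while anticommutation gives
`(B S_j)(R_j B) = B T^(2j+1) B = -(T^(2j+1) - T^(2j+3))`. The trace of a product of two
Hilbert–Schmidt operators does not depend on their order, so `Tr(T^(2j+1) - T^(2j+3))` equals
its own negative and vanishes.
-/

open ContinuousLinearMap
open scoped InnerProductSpace

variable {H : Type*} [NormedAddCommGroup H] [InnerProductSpace ℂ H] [CompleteSpace H]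

/-- The absolute value `|T| = √(T*T)` of a bounded operator. -/
noncomputable def opAbs (T : H →L[ℂ] H) : H →L[ℂ] H := CFC.sqrt (adjoint T * T)

/-- A bounded operator is trace class if the diagonal of `|T|` is summable in some
(equivalently, any) Hilbert basis. -/
def IsTraceClass (T : H →L[ℂ] H) : Prop :=
  ∃ (ι : Type) (e : HilbertBasis ι ℂ H), Summable fun i => ⟪e i, opAbs T (e i)⟫_ℂ

/-- `Q∘P` viewed as a linear map `ran P → ran Q`. -/
noncomputable def QPmap (P Q : H →L[ℂ] H) :
    LinearMap.range (P : H →ₗ[ℂ] H) →ₗ[ℂ] LinearMap.range (Q : H →ₗ[ℂ] H) :=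
  (Q : H →ₗ[ℂ] H).restrict (p := LinearMap.range (P : H →ₗ[ℂ] H)) (q := LinearMap.range (Q : H →ₗ[ℂ] H))
    (fun x _ => ⟨x, rfl⟩)

open scoped ENNReal

section HilbertSchmidt

variable {𝕜 E ι κ : Type*} [RCLike 𝕜] [NormedAddCommGroup E] [InnerProductSpace 𝕜 E]

theorem HilbertBasis.hasSum_norm_inner_sq (e : HilbertBasis ι 𝕜 E) (x : E) :
    HasSum (fun i => ‖⟪e i, x⟫_𝕜‖ ^ 2) (‖x‖ ^ 2) := by
  simpa [e.repr_apply_apply] using lp.hasSum_norm (p := 2) (by norm_num) (e.repr x)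

theorem HilbertBasis.tsum_enorm_inner_sq (e : HilbertBasis ι 𝕜 E) (x : E) :
    ∑' i, ‖⟪e i, x⟫_𝕜‖ₑ ^ 2 = ‖x‖ₑ ^ 2 := by
  have h : HasSum (fun i => ‖⟪e i, x⟫_𝕜‖₊ ^ 2) (‖x‖₊ ^ 2) := by
    rw [← NNReal.hasSum_coe]; push_cast; exact e.hasSum_norm_inner_sq x
  simpa [enorm] using ENNReal.tsum_coe_eq h

noncomputable def hsNormSq (e : HilbertBasis ι 𝕜 E) (A : E →L[𝕜] E) : ℝ≥0∞ :=
  ∑' i, ‖A (e i)‖ₑ ^ 2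

theorem hsNormSq_ne_top_iff (e : HilbertBasis ι 𝕜 E) (A : E →L[𝕜] E) :
    hsNormSq e A ≠ ⊤ ↔ Summable fun i => ‖A (e i)‖ ^ 2 := by
  simp only [hsNormSq, enorm, ← ENNReal.coe_pow, ENNReal.tsum_coe_ne_top_iff_summable,
    ← NNReal.summable_coe, NNReal.coe_pow, coe_nnnorm]

theorem hsNormSq_mono_of_norm_le (e : HilbertBasis ι 𝕜 E) {A B : E →L[𝕜] E}
    (h : ∀ x, ‖A x‖ ≤ ‖B x‖) : hsNormSq e A ≤ hsNormSq e B :=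
  ENNReal.tsum_le_tsum fun i => by gcongr; exact enorm_le_iff_norm_le.mpr (h (e i))

theorem hsNormSq_mul_le_left (e : HilbertBasis ι 𝕜 E) {C : E →L[𝕜] E} (hC : ‖C‖ ≤ 1)
    (A : E →L[𝕜] E) : hsNormSq e (C * A) ≤ hsNormSq e A :=
  hsNormSq_mono_of_norm_le e fun x => C.le_of_opNorm_le hC (A x) |>.trans_eq (one_mul _)

theorem summable_norm_inner_sq_prod (e : HilbertBasis ι 𝕜 E) {A : E →L[𝕜] E}
    (hA : hsNormSq e A ≠ ⊤) :
    Summable fun p : ι × ι => ‖⟪e p.2, A (e p.1)⟫_𝕜‖ ^ 2 := by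
  refine (summable_prod_of_nonneg fun _ => by positivity).mpr
    ⟨fun i => (e.hasSum_norm_inner_sq (A (e i))).summable, ?_⟩
  simpa only [fun i => (e.hasSum_norm_inner_sq (A (e i))).tsum_eq]
    using (hsNormSq_ne_top_iff e A).mp hA

variable [CompleteSpace E]

theorem hsNormSq_eq_hsNormSq_adjoint (e : HilbertBasis ι 𝕜 E) (f : HilbertBasis κ 𝕜 E)
    (A : E →L[𝕜] E) : hsNormSq e A = hsNormSq f (adjoint A) := calc
  hsNormSq e A = ∑' i, ∑' j, ‖⟪f j, A (e i)⟫_𝕜‖ₑ ^ 2 :=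
    tsum_congr fun i => (f.tsum_enorm_inner_sq _).symm
  _ = ∑' j, ∑' i, ‖⟪e i, adjoint A (f j)⟫_𝕜‖ₑ ^ 2 := by
    rw [ENNReal.tsum_comm]
    refine tsum_congr fun j => tsum_congr fun i => ?_
    rw [← adjoint_inner_left, ← enorm_norm, norm_inner_symm, enorm_norm]
  _ = hsNormSq f (adjoint A) := tsum_congr fun j => e.tsum_enorm_inner_sq _

theorem hsNormSq_adjoint (e : HilbertBasis ι 𝕜 E) (A : E →L[𝕜] E) :
    hsNormSq e (adjoint A) = hsNormSq e A :=
  (hsNormSq_eq_hsNormSq_adjoint e e A).symm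

theorem hsNormSq_eq_of_hilbertBasis (e : HilbertBasis ι 𝕜 E) (f : HilbertBasis κ 𝕜 E)
    (A : E →L[𝕜] E) : hsNormSq e A = hsNormSq f A := by
  rw [hsNormSq_eq_hsNormSq_adjoint e f, hsNormSq_adjoint]

theorem hsNormSq_mul_le_right (e : HilbertBasis ι 𝕜 E) {C : E →L[𝕜] E} (hC : ‖C‖ ≤ 1)
    (A : E →L[𝕜] E) : hsNormSq e (A * C) ≤ hsNormSq e A := by
  rw [← hsNormSq_adjoint, ← hsNormSq_adjoint e A, ← star_eq_adjoint, star_mul, star_eq_adjoint,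
    star_eq_adjoint]
  exact hsNormSq_mul_le_left e (by rwa [LinearIsometryEquiv.norm_map]) _

end HilbertSchmidt

section Trace

variable {𝕜 E ι : Type*} [RCLike 𝕜] [NormedAddCommGroup E] [InnerProductSpace 𝕜 E]
  [CompleteSpace E] (e : HilbertBasis ι 𝕜 E) {U V : E →L[𝕜] E}

theorem summable_inner_mul_apply (hU : hsNormSq e U ≠ ⊤) (hV : hsNormSq e V ≠ ⊤) :
    Summable fun i => ⟪e i, (U * V) (e i)⟫_𝕜 := by
  rw [← hsNormSq_adjoint, hsNormSq_ne_top_iff] at hU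
  refine .of_norm_bounded (hU.add ((hsNormSq_ne_top_iff e V).mp hV)) fun i => ?_
  rw [mul_apply_eq_comp, ← adjoint_inner_left]
  have := norm_inner_le_norm (𝕜 := 𝕜) (adjoint U (e i)) (V (e i))
  nlinarith [norm_nonneg (adjoint U (e i)), norm_nonneg (V (e i))]

theorem tsum_inner_mul_comm (hU : hsNormSq e U ≠ ⊤) (hV : hsNormSq e V ≠ ⊤) :
    ∑' i, ⟪e i, (U * V) (e i)⟫_𝕜 = ∑' i, ⟪e i, (V * U) (e i)⟫_𝕜 := by
  let F : ι → ι → 𝕜 := fun i j => ⟪adjoint U (e i), e j⟫_𝕜 * ⟪e j, V (e i)⟫_𝕜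
  have hF : Summable (Function.uncurry F) := by
    rw [← hsNormSq_adjoint] at hU
    refine .of_norm_bounded ((summable_norm_inner_sq_prod e hU).add
      (summable_norm_inner_sq_prod e hV)) fun ⟨i, j⟩ => ?_
    simp only [Function.uncurry_apply_pair, F, norm_mul, norm_inner_symm (adjoint U (e i))]
    nlinarith [norm_nonneg ⟪e j, adjoint U (e i)⟫_𝕜, norm_nonneg ⟪e j, V (e i)⟫_𝕜]
  calc ∑' i, ⟪e i, (U * V) (e i)⟫_𝕜 = ∑' i, ∑' j, F i j := tsum_congr fun i => by
        rw [mul_apply_eq_comp, ← adjoint_inner_left, e.tsum_inner_mul_inner]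
    _ = ∑' j, ∑' i, F i j := hF.tsum_comm.symm
    _ = ∑' j, ⟪e j, (V * U) (e j)⟫_𝕜 := tsum_congr fun j => by
        rw [mul_apply_eq_comp, ← adjoint_inner_left, ← e.tsum_inner_mul_inner]
        refine tsum_congr fun i => ?_
        rw [adjoint_inner_left, ← adjoint_inner_left U, mul_comm]

end Trace

section Anticommute

variable {R : Type*} [Ring R] {p q : R}

theorem IsIdempotentElem.sub_mul_one_sub_sub (hp : IsIdempotentElem p)
    (hq : IsIdempotentElem q) : (p - q) * (1 - p - q) = -((1 - p - q) * (p - q)) := by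
  simp only [sub_mul, mul_sub, mul_one, one_mul, hp.eq, hq.eq]
  abel

theorem IsIdempotentElem.sub_mul_self_add_one_sub_sub_mul_self (hp : IsIdempotentElem p)
    (hq : IsIdempotentElem q) : (p - q) * (p - q) + (1 - p - q) * (1 - p - q) = 1 := by
  simp only [sub_mul, mul_sub, mul_one, one_mul, hp.eq, hq.eq]
  abel

theorem pow_odd_mul_of_mul_eq_neg {a b : R} (h : a * b = -(b * a)) (n : ℕ) :
    a ^ (2 * n + 1) * b = -(b * a ^ (2 * n + 1)) := by
  have hcomm : Commute (a ^ 2) b := by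
    rw [Commute, SemiconjBy, sq, mul_assoc, h, mul_neg, ← mul_assoc, h, neg_mul, neg_neg, mul_assoc]
  rw [pow_succ, pow_mul, mul_assoc, h, mul_neg, ← mul_assoc, (hcomm.pow_left n).eq, mul_assoc]

end Anticommute

section SelfAdjoint

variable {𝕜 E : Type*} [RCLike 𝕜] [NormedAddCommGroup E] [InnerProductSpace 𝕜 E]
  [CompleteSpace E]

theorem IsSelfAdjoint.inner_mul_self_apply {A : E →L[𝕜] E} (hA : IsSelfAdjoint A) (x : E) :
    ⟪x, (A * A) x⟫_𝕜 = ((‖A x‖ ^ 2 : ℝ) : 𝕜) := by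
  rw [mul_apply_eq_comp, ← adjoint_inner_left, hA.adjoint_eq, inner_self_eq_norm_sq_to_K]
  norm_cast

theorem IsSelfAdjoint.norm_apply_eq_of_mul_self_eq {C D : E →L[𝕜] E} (hC : IsSelfAdjoint C)
    (hD : IsSelfAdjoint D) (h : C * C = D * D) (x : E) : ‖C x‖ = ‖D x‖ := by
  have := hC.inner_mul_self_apply x
  rw [h, hD.inner_mul_self_apply, RCLike.ofReal_inj] at this
  exact (pow_left_inj₀ (norm_nonneg _) (norm_nonneg _) two_ne_zero).mp this.symm

theorem IsSelfAdjoint.norm_le_one_of_mul_self_add_mul_self_eq_one {T B : E →L[𝕜] E}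
    (hT : IsSelfAdjoint T) (hB : IsSelfAdjoint B) (h : T * T + B * B = 1) : ‖T‖ ≤ 1 := by
  refine T.opNorm_le_bound zero_le_one fun x => ?_
  have hx : ‖T x‖ ^ 2 + ‖B x‖ ^ 2 = ‖x‖ ^ 2 := by
    apply RCLike.ofReal_injective (K := 𝕜)
    rw [RCLike.ofReal_add, ← hT.inner_mul_self_apply, ← hB.inner_mul_self_apply,
      ← inner_add_right, ← add_apply, h, one_apply_eq_self, inner_self_eq_norm_sq_to_K]
    norm_cast
  nlinarith [norm_nonneg (T x), norm_nonneg x]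

theorem IsSelfAdjoint.summable_inner_mul_self_apply_iff {ι : Type*} {A : E →L[𝕜] E}
    (hA : IsSelfAdjoint A) (e : HilbertBasis ι 𝕜 E) :
    (Summable fun i => ⟪e i, (A * A) (e i)⟫_𝕜) ↔ hsNormSq e A ≠ ⊤ := by
  simp only [hA.inner_mul_self_apply, RCLike.summable_ofReal, hsNormSq_ne_top_iff]

end SelfAdjoint

-- `Real.sqrt` vanishes on negative numbers, so this is `sgn t * √|t|`.
noncomputable def signedSqrt (t : ℝ) : ℝ := √t - √(-t)

@[fun_prop]
theorem continuous_signedSqrt : Continuous signedSqrt := by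
  unfold signedSqrt; fun_prop

theorem signedSqrt_mul_sqrt_abs (t : ℝ) : signedSqrt t * √|t| = t := by
  rcases le_total 0 t with ht | ht
  · simp [signedSqrt, abs_of_nonneg ht, Real.sqrt_eq_zero'.mpr (neg_nonpos.mpr ht),
      Real.mul_self_sqrt ht]
  · simp [signedSqrt, abs_of_nonpos ht, Real.sqrt_eq_zero'.mpr ht,
      Real.mul_self_sqrt (neg_nonneg.mpr ht)]

theorem signedSqrt_mul_self (t : ℝ) : signedSqrt t * signedSqrt t = |t| := by
  rcases le_total 0 t with ht | ht
  · simp [signedSqrt, abs_of_nonneg ht, Real.sqrt_eq_zero'.mpr (neg_nonpos.mpr ht),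
      Real.mul_self_sqrt ht]
  · simp [signedSqrt, abs_of_nonpos ht, Real.sqrt_eq_zero'.mpr ht,
      Real.mul_self_sqrt (neg_nonneg.mpr ht)]

theorem signedSqrt_abs_pow_mul_sqrt_abs_pow (j : ℕ) (t : ℝ) :
    signedSqrt t * |t| ^ j * (√|t| * |t| ^ j) = t ^ (2 * j + 1) := by
  rw [mul_mul_mul_comm, signedSqrt_mul_sqrt_abs, ← mul_pow, abs_mul_abs_self]
  ring

section OddPowerFactorization

variable {A : Type*} [CStarAlgebra A]

theorem cfc_mul_cfc_of_forall {f g h : ℝ → ℝ} (hfg : ∀ t, f t * g t = h t) (a : A)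
    (hf : Continuous f := by fun_prop) (hg : Continuous g := by fun_prop) :
    cfc f a * cfc g a = cfc h a := by
  rw [← cfc_mul (R := ℝ) f g a]
  exact cfc_congr fun t _ => hfg t

noncomputable def absPowHalf (a : A) (j : ℕ) : A := cfc (fun t : ℝ => √|t| * |t| ^ j) a

noncomputable def sgnAbsPowHalf (a : A) (j : ℕ) : A :=
  cfc (fun t : ℝ => signedSqrt t * |t| ^ j) a

theorem isSelfAdjoint_absPowHalf (a : A) (j : ℕ) : IsSelfAdjoint (absPowHalf a j) :=
  cfc_predicate _ _

theorem isSelfAdjoint_sgnAbsPowHalf (a : A) (j : ℕ) : IsSelfAdjoint (sgnAbsPowHalf a j) :=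
  cfc_predicate _ _

theorem sgnAbsPowHalf_mul_absPowHalf {a : A} (ha : IsSelfAdjoint a) (j : ℕ) :
    sgnAbsPowHalf a j * absPowHalf a j = a ^ (2 * j + 1) := by
  rw [sgnAbsPowHalf, absPowHalf, cfc_mul_cfc_of_forall (signedSqrt_abs_pow_mul_sqrt_abs_pow j) a,
    cfc_pow_id a]

theorem absPowHalf_mul_self (a : A) (j : ℕ) :
    absPowHalf a j * absPowHalf a j = cfc (fun t : ℝ => |t| ^ (2 * j + 1)) a := by
  refine cfc_mul_cfc_of_forall (fun t => ?_) a
  rw [mul_mul_mul_comm, Real.mul_self_sqrt (abs_nonneg t), ← pow_add, ← two_mul, pow_succ']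

theorem sgnAbsPowHalf_mul_self (a : A) (j : ℕ) :
    sgnAbsPowHalf a j * sgnAbsPowHalf a j = absPowHalf a j * absPowHalf a j := by
  rw [absPowHalf_mul_self]
  refine cfc_mul_cfc_of_forall (fun t => ?_) a
  rw [mul_mul_mul_comm, signedSqrt_mul_self, ← pow_add, ← two_mul, pow_succ']

theorem absPowHalf_succ (a : A) (j : ℕ) :
    absPowHalf a (j + 1) = cfc (fun t : ℝ => |t|) a * absPowHalf a j := by
  refine (cfc_mul_cfc_of_forall (fun t => ?_) a).symm
  ring

theorem cfc_abs_mul_self {a : A} (ha : IsSelfAdjoint a) :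
    cfc (fun t : ℝ => |t|) a * cfc (fun t : ℝ => |t|) a = a * a := by
  rw [cfc_mul_cfc_of_forall (h := fun t => t * t) (fun t => abs_mul_abs_self t),
    cfc_mul (fun t : ℝ => t) (fun t : ℝ => t), cfc_id' ℝ a]

theorem absPowHalf_mul_one_sub_mul_sgnAbsPowHalf {a : A} (ha : IsSelfAdjoint a) (j : ℕ) :
    absPowHalf a j * ((1 - a * a) * sgnAbsPowHalf a j) =
      a ^ (2 * j + 1) - a ^ (2 * j + 1 + 2) := by
  have h1 : 1 - a * a = cfc (fun t : ℝ => 1 - t * t) a := by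
    rw [cfc_sub (fun _ : ℝ => 1) (fun t : ℝ => t * t) a, cfc_const_one ℝ a,
      cfc_mul (fun t : ℝ => t) (fun t : ℝ => t) a, cfc_id' ℝ a]
  rw [h1, absPowHalf, sgnAbsPowHalf, cfc_mul_cfc_of_forall (fun t => rfl) a,
    cfc_mul_cfc_of_forall (fun t => rfl) a, ← cfc_pow_id (R := ℝ) a,
    ← cfc_pow_id (R := ℝ) a (2 * j + 1 + 2),
    ← cfc_sub (fun t : ℝ => t ^ (2 * j + 1)) (fun t : ℝ => t ^ (2 * j + 1 + 2)) a]
  refine cfc_congr fun t _ => ?_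
  linear_combination (1 - t * t) * signedSqrt_abs_pow_mul_sqrt_abs_pow j t

end OddPowerFactorization

section OddPowerHilbertSchmidt

variable {E ι : Type*} [NormedAddCommGroup E] [InnerProductSpace ℂ E] [CompleteSpace E]

theorem opAbs_pow_odd {T : E →L[ℂ] E} (hT : IsSelfAdjoint T) (j : ℕ) :
    opAbs (T ^ (2 * j + 1)) = absPowHalf T j * absPowHalf T j := by
  rw [opAbs, (hT.pow _).adjoint_eq, absPowHalf_mul_self]
  refine CFC.sqrt_unique ?_ (cfc_nonneg fun t _ => by positivity)
  rw [cfc_mul_cfc_of_forall (h := fun t => t ^ (2 * j + 1) * t ^ (2 * j + 1))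
    (fun t => by rw [← mul_pow, abs_mul_abs_self, mul_pow]) T,
    cfc_mul (fun t : ℝ => t ^ (2 * j + 1)) (fun t : ℝ => t ^ (2 * j + 1)) T, cfc_pow_id T]

theorem isTraceClass_pow_odd_iff {T : E →L[ℂ] E} (hT : IsSelfAdjoint T) (j : ℕ) :
    IsTraceClass (T ^ (2 * j + 1)) ↔
      ∃ (ι : Type) (e : HilbertBasis ι ℂ E), hsNormSq e (absPowHalf T j) ≠ ⊤ := by
  simp only [IsTraceClass, opAbs_pow_odd hT,
    (isSelfAdjoint_absPowHalf T j).summable_inner_mul_self_apply_iff]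

theorem hsNormSq_sgnAbsPowHalf (e : HilbertBasis ι ℂ E) (T : E →L[ℂ] E) (j : ℕ) :
    hsNormSq e (sgnAbsPowHalf T j) = hsNormSq e (absPowHalf T j) := by
  have h := (isSelfAdjoint_sgnAbsPowHalf T j).norm_apply_eq_of_mul_self_eq
    (isSelfAdjoint_absPowHalf T j) (sgnAbsPowHalf_mul_self T j)
  exact (hsNormSq_mono_of_norm_le e fun x => (h x).le).antisymm
    (hsNormSq_mono_of_norm_le e fun x => (h x).ge)

theorem norm_absPowHalf_succ_apply_le {T : E →L[ℂ] E} (hT : IsSelfAdjoint T) (hT1 : ‖T‖ ≤ 1)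
    (j : ℕ) (x : E) :
    ‖absPowHalf T (j + 1) x‖ ≤ ‖absPowHalf T j x‖ := by
  rw [absPowHalf_succ, mul_apply_eq_comp, (cfc_predicate _ _ : IsSelfAdjoint
    (cfc (fun t : ℝ => |t|) T)).norm_apply_eq_of_mul_self_eq hT (cfc_abs_mul_self hT)]
  exact T.le_of_opNorm_le hT1 _ |>.trans_eq (one_mul _)

theorem antitone_hsNormSq_absPowHalf {T : E →L[ℂ] E} (hT : IsSelfAdjoint T) (hT1 : ‖T‖ ≤ 1)
    (e : HilbertBasis ι ℂ E) : Antitone fun j => hsNormSq e (absPowHalf T j) :=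
  antitone_nat_of_succ_le fun j =>
    hsNormSq_mono_of_norm_le e (norm_absPowHalf_succ_apply_le hT hT1 j)

end OddPowerHilbertSchmidt

theorem tsum_inner_pow_odd_add_two {E ι : Type*} [NormedAddCommGroup E] [InnerProductSpace ℂ E]
    [CompleteSpace E] {T B : E →L[ℂ] E} (hT : IsSelfAdjoint T) (hB : IsSelfAdjoint B)
    (hanti : T * B = -(B * T)) (hsq : T * T + B * B = 1) (e : HilbertBasis ι ℂ E) {j : ℕ}
    (hj : hsNormSq e (absPowHalf T j) ≠ ⊤) :
    ∑' i, ⟪e i, (T ^ (2 * j + 1 + 2)) (e i)⟫_ℂ = ∑' i, ⟪e i, (T ^ (2 * j + 1)) (e i)⟫_ℂ := by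
  set R := absPowHalf T j
  set S := sgnAbsPowHalf T j
  have hBB : B * B = 1 - T * T := eq_sub_of_add_eq' hsq
  have hB1 : ‖B‖ ≤ 1 := hB.norm_le_one_of_mul_self_add_mul_self_eq_one hT (by rwa [add_comm])
  have hS : hsNormSq e S ≠ ⊤ := by rwa [hsNormSq_sgnAbsPowHalf]
  have hU : hsNormSq e (B * S) ≠ ⊤ := ne_top_of_le_ne_top hS (hsNormSq_mul_le_left e hB1 S)
  have hV : hsNormSq e (R * B) ≠ ⊤ := ne_top_of_le_ne_top hj (hsNormSq_mul_le_right e hB1 R)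
  have hVU : R * B * (B * S) = T ^ (2 * j + 1) - T ^ (2 * j + 1 + 2) := by
    rw [mul_assoc, ← mul_assoc B, hBB, absPowHalf_mul_one_sub_mul_sgnAbsPowHalf hT]
  have hUV : B * S * (R * B) = -(R * B * (B * S)) := by
    rw [hVU, mul_assoc, ← mul_assoc S, sgnAbsPowHalf_mul_absPowHalf hT, ← mul_assoc,
      ← neg_neg (B * _), ← pow_odd_mul_of_mul_eq_neg hanti, neg_mul, mul_assoc, hBB, mul_sub,
      mul_one, ← sq, ← pow_add]
  have hsum : Summable fun i => ⟪e i, (T ^ (2 * j + 1)) (e i)⟫_ℂ := by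
    rw [← sgnAbsPowHalf_mul_absPowHalf hT]; exact summable_inner_mul_apply e hS hj
  have hzero : ∑' i, ⟪e i, (R * B * (B * S)) (e i)⟫_ℂ = 0 := by
    have := tsum_inner_mul_comm e hV hU
    rw [hUV] at this
    simpa only [neg_apply, inner_neg_right, tsum_neg, self_eq_neg] using this
  calc ∑' i, ⟪e i, (T ^ (2 * j + 1 + 2)) (e i)⟫_ℂ
      = ∑' i, (⟪e i, (T ^ (2 * j + 1)) (e i)⟫_ℂ - ⟪e i, (R * B * (B * S)) (e i)⟫_ℂ) :=
        tsum_congr fun i => by rw [hVU, sub_apply, inner_sub_right, sub_sub_cancel]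
    _ = ∑' i, ⟪e i, (T ^ (2 * j + 1)) (e i)⟫_ℂ := by
        rw [hsum.tsum_sub (summable_inner_mul_apply e hV hU), hzero, sub_zero]

theorem stmt6_general
    (P Q : H →L[ℂ] H) (hP1 : adjoint P = P) (hP2 : P * P = P)
    (hQ1 : adjoint Q = Q) (hQ2 : Q * Q = Q) (k : ℕ)
    (htc : IsTraceClass ((P - Q) ^ (2 * k + 1))) :
    ∀ m : ℕ, IsTraceClass ((P - Q) ^ (2 * k + 1 + 2 * m)) ∧
      ∀ (ι : Type) (e : HilbertBasis ι ℂ H),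
        ∑' i, ⟪e i, ((P - Q) ^ (2 * k + 1 + 2 * m)) (e i)⟫_ℂ =
        ∑' i, ⟪e i, ((P - Q) ^ (2 * k + 1)) (e i)⟫_ℂ := by
  have hP : IsSelfAdjoint P := (star_eq_adjoint P).trans hP1
  have hQ : IsSelfAdjoint Q := (star_eq_adjoint Q).trans hQ1
  have hT : IsSelfAdjoint (P - Q) := hP.sub hQ
  have hB : IsSelfAdjoint (1 - P - Q) := ((IsSelfAdjoint.one _).sub hP).sub hQ
  have hanti := IsIdempotentElem.sub_mul_one_sub_sub hP2 hQ2
  have hsq := IsIdempotentElem.sub_mul_self_add_one_sub_sub_mul_self hP2 hQ2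
  have hT1 := hT.norm_le_one_of_mul_self_add_mul_self_eq_one hB hsq
  obtain ⟨ι₀, e₀, hk⟩ := (isTraceClass_pow_odd_iff hT k).mp htc
  have hfin {ι : Type} (e : HilbertBasis ι ℂ H) {j : ℕ} (hj : k ≤ j) :
      hsNormSq e (absPowHalf (P - Q) j) ≠ ⊤ :=
    ne_top_of_le_ne_top ((hsNormSq_eq_of_hilbertBasis e e₀ _).trans_ne hk)
      (antitone_hsNormSq_absPowHalf hT hT1 e hj)
  intro m
  rw [show 2 * k + 1 + 2 * m = 2 * (k + m) + 1 by ring]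
  refine ⟨(isTraceClass_pow_odd_iff hT _).mpr ⟨ι₀, e₀, hfin e₀ (by omega)⟩, fun ι e => ?_⟩
  induction m with
  | zero => rfl
  | succ m ih =>
    rw [show 2 * (k + (m + 1)) + 1 = 2 * (k + m) + 1 + 2 by ring,
      tsum_inner_pow_odd_add_two hT hB hanti hsq e (hfin e (by omega)), ih]

theorem stmt6 [TopologicalSpace.SeparableSpace H]
    (P Q : H →L[ℂ] H) (hP1 : adjoint P = P) (hP2 : P * P = P)
    (hQ1 : adjoint Q = Q) (hQ2 : Q * Q = Q) (k : ℕ)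
    (htc : IsTraceClass ((P - Q) ^ (2 * k + 1))) :
    ∀ m : ℕ, IsTraceClass ((P - Q) ^ (2 * k + 1 + 2 * m)) ∧
      ∀ (ι : Type) (e : HilbertBasis ι ℂ H),
        ∑' i, ⟪e i, ((P - Q) ^ (2 * k + 1 + 2 * m)) (e i)⟫_ℂ =
        ∑' i, ⟪e i, ((P - Q) ^ (2 * k + 1)) (e i)⟫_ℂ :=
  stmt6_general P Q hP1 hP2 hQ1 hQ2 k htc
end

section
/- Let P and Q be orthogonal projections on a Hilbert space H with P - Q compact. Then the operator QP, restricted to a map from ran(P) to ran(Q), is a Fredholm operator. -/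
open ContinuousLinearMap
open scoped InnerProductSpace

variable {H : Type*} [NormedAddCommGroup H] [InnerProductSpace ℂ H] [CompleteSpace H]

/-!
If `x ∈ ran P` and `Q x = 0`, then `(P - Q) x = x`: the kernel of `QP` lies in the
`1`-eigenspace of the compact operator `P - Q`, which is finite dimensional. On `ran Q` we have
`QP = 1 + K` with `K = Q (P - Q) Q` compact and self-adjoint; by the Fredholm alternative the range
of `K + 1` is the orthogonal complement of the (finite-dimensional) `-1`-eigenspace of `K`, and the
range of `QP` contains it.
-/

open Module End

namespace IsCompactOperator

section NormedSpace

variable {𝕜 E : Type*} [NontriviallyNormedField 𝕜] [CompleteSpace 𝕜] [NormedAddCommGroup E]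
  [NormedSpace 𝕜 E] {T : E →L[𝕜] E} {μ : 𝕜}

theorem finiteDimensional_eigenspace (hT : IsCompactOperator T) (hμ : μ ≠ 0) :
    FiniteDimensional 𝕜 (eigenspace (T : End 𝕜 E) μ) := by
  have hV : ∀ v ∈ eigenspace (T : End 𝕜 E) μ, T v ∈ eigenspace (T : End 𝕜 E) μ := fun v hv => by
    rw [show T v = μ • v from mem_eigenspace_iff.mp hv]
    exact Submodule.smul_mem _ μ hv
  have hid : id = μ⁻¹ • (T : End 𝕜 E).restrict hV := by
    funext v
    ext
    simp [mem_eigenspace_iff.mp v.2, hμ]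
  exact .of_isCompactOperator_id (hid ▸ (hT.restrict hV (T.isClosed_eigenspace μ)).smul μ⁻¹)

end NormedSpace

section InnerProductSpace

variable {𝕜 G : Type*} [RCLike 𝕜] [NormedAddCommGroup G] [InnerProductSpace 𝕜 G]
  [CompleteSpace G] {T : G →L[𝕜] G} {μ : ℝ}

theorem range_sub_smul_one_eq_orthogonal_eigenspace (hT : IsCompactOperator T)
    (hsym : (T : G →ₗ[𝕜] G).IsSymmetric) (hμ : μ ≠ 0) :
    (T - (μ : 𝕜) • 1).range = (eigenspace (T : End 𝕜 G) μ)ᗮ := by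
  set N := eigenspace (T : End 𝕜 G) μ
  apply le_antisymm
  · rintro _ ⟨x, rfl⟩ n hn
    have hTn : T n = (μ : 𝕜) • n := mem_eigenspace_iff.mp hn
    have hsym_nx : ⟪T n, x⟫_𝕜 = ⟪n, T x⟫_𝕜 := hsym n x
    simp [inner_sub_right, inner_smul_right, ← hsym_nx, hTn, inner_smul_left]
  · intro m hm
    have hM : ∀ v ∈ Nᗮ, T v ∈ Nᗮ := hsym.invariant_orthogonalComplement_eigenspace μ
    have hS : IsCompactOperator (T.restrict hM) := hT.restrict hM (Submodule.isClosed_orthogonal N)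
    have hSμ : ¬ HasEigenvalue ((T.restrict hM : Nᗮ →L[𝕜] Nᗮ) : End 𝕜 Nᗮ) μ := by
      rw [hasEigenvalue_iff, not_not]
      exact eigenspace_restrict_eq_bot hM N.orthogonal_disjoint
    have hres := (hS.hasEigenvalue_or_mem_resolventSet (by exact_mod_cast hμ)).resolve_left hSμ
    rw [spectrum.mem_resolventSet_iff, ContinuousLinearMap.isUnit_iff_bijective] at hres
    obtain ⟨y, hy⟩ := hres.2 ⟨m, hm⟩
    have hy' : (μ : 𝕜) • (y : G) - T y = m := congrArg Subtype.val hy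
    exact ⟨-y, by simp [← hy', neg_add_eq_sub]⟩

theorem finiteDimensional_quotient_range_sub_smul_one (hT : IsCompactOperator T)
    (hsym : (T : G →ₗ[𝕜] G).IsSymmetric) (hμ : μ ≠ 0) :
    FiniteDimensional 𝕜 (G ⧸ (T - (μ : 𝕜) • 1).range) := by
  set N := eigenspace (T : End 𝕜 G) μ
  have : FiniteDimensional 𝕜 N := hT.finiteDimensional_eigenspace (by exact_mod_cast hμ)
  have : FiniteDimensional 𝕜 Nᗮᗮ := by rwa [N.orthogonal_orthogonal]
  rw [hT.range_sub_smul_one_eq_orthogonal_eigenspace hsym hμ]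
  exact (Nᗮ.quotientEquivOrthogonal).toLinearEquiv.symm.finiteDimensional

end InnerProductSpace

end IsCompactOperator

section QPmap

variable {E : Type*} [NormedAddCommGroup E] [InnerProductSpace ℂ E] {P Q : E →L[ℂ] E}

theorem coe_QPmap_apply (x : LinearMap.range (P : E →ₗ[ℂ] E)) : (QPmap P Q x : E) = Q x := rfl

theorem mem_eigenspace_sub_of_mem_ker_QPmap (hP : IsIdempotentElem P)
    {x : LinearMap.range (P : E →ₗ[ℂ] E)} (hx : x ∈ LinearMap.ker (QPmap P Q)) :
    (x : E) ∈ eigenspace ((P - Q : E →L[ℂ] E) : End ℂ E) 1 := by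
  have hQx : Q x = 0 := by rw [← coe_QPmap_apply, hx, ZeroMemClass.coe_zero]
  have hPx : P x = x := LinearMap.IsIdempotentElem.mem_range_iff hP.toLinearMap |>.mp x.2
  simp [hPx, hQx]

theorem finiteDimensional_ker_QPmap (hP : IsIdempotentElem P) (hcpt : IsCompactOperator (P - Q)) :
    FiniteDimensional ℂ (LinearMap.ker (QPmap P Q)) := by
  have := hcpt.finiteDimensional_eigenspace one_ne_zero
  let ι := ((LinearMap.range (P : E →ₗ[ℂ] E)).subtype ∘ₗ (LinearMap.ker (QPmap P Q)).subtype)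
    |>.codRestrict _ fun x => mem_eigenspace_sub_of_mem_ker_QPmap hP x.2
  exact .of_injective ι fun x y hxy => Subtype.ext (Subtype.ext (congrArg Subtype.val hxy :))

theorem finiteDimensional_quotient_range_QPmap [CompleteSpace E] (hP : IsSelfAdjoint P)
    (hQ : IsStarProjection Q) (hcpt : IsCompactOperator (P - Q)) :
    FiniteDimensional ℂ (LinearMap.range (Q : E →ₗ[ℂ] E) ⧸ LinearMap.range (QPmap P Q)) := by
  set V := LinearMap.range (Q : E →ₗ[ℂ] E)
  have hV : IsClosed (V : Set E) := hQ.isIdempotentElem.isClosed_range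
  have : CompleteSpace V := hV.completeSpace_coe
  set K := Q * (P - Q) * Q
  have hKV : ∀ v ∈ V, K v ∈ V := fun v _ => ⟨_, rfl⟩
  have hKsym : (K : E →ₗ[ℂ] E).IsSymmetric := by
    have := (hP.sub hQ.isSelfAdjoint).conjugate Q
    rw [hQ.isSelfAdjoint.star_eq] at this
    exact this.isSymmetric
  have hKcpt : IsCompactOperator (K.restrict hKV) := ((hcpt.clm_comp Q).comp_clm Q).restrict hKV hV
  have hle : (K.restrict hKV - ((-1 : ℝ) : ℂ) • 1).range ≤ LinearMap.range (QPmap P Q) := by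
    rintro _ ⟨y, rfl⟩
    refine ⟨⟨P y, y, rfl⟩, Subtype.ext ?_⟩
    have hQy : Q y = y :=
      LinearMap.IsIdempotentElem.mem_range_iff hQ.isIdempotentElem.toLinearMap |>.mp y.2
    simp [K, coe_QPmap_apply, hQy]
  have := hKcpt.finiteDimensional_quotient_range_sub_smul_one (hKsym.restrict_invariant hKV)
    (by norm_num : (-1 : ℝ) ≠ 0)
  exact .of_surjective _ (Submodule.factor_surjective hle)

end QPmap

theorem stmt7 (P Q : H →L[ℂ] H) (hP1 : adjoint P = P) (hP2 : P * P = P)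
    (hQ1 : adjoint Q = Q) (hQ2 : Q * Q = Q)
    (hcpt : IsCompactOperator ⇑(P - Q)) :
    FiniteDimensional ℂ (LinearMap.ker (QPmap P Q)) ∧
    FiniteDimensional ℂ (↥(LinearMap.range (Q : H →ₗ[ℂ] H)) ⧸ LinearMap.range (QPmap P Q)) :=
  ⟨finiteDimensional_ker_QPmap hP2 hcpt, finiteDimensional_quotient_range_QPmap hP1 ⟨hQ2, hQ1⟩ hcpt⟩
end
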